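/- arXiv:2212.11481 — 2 statements merged into one kernel-verified Lean document; each statement's English description precedes it below -/
import Mathlib

section
/- Let f be a C¹ function on (0,∞) and consider the loss L(P) = ∫ f(P(x)) dP_*(x) over absolutely continuous probability densities P on ℝ^d. If for every absolutely continuous target P_* the loss L is minimized (over absolutely continuous P) at P = P_*, then there exist constants c ≤ 0 and c' ∈ ℝ such that f(p) = c·log p + c' for all p > 0. -/
open MeasureTheory

/-- A probability density function on ℝ^d (with respect to Lebesgue measure). -/
def IsDensityFn (d : ℕ) (p : (Fin d → ℝ) → ℝ) : Prop :=
  Measurable p ∧ (∀ x, 0 ≤ p x) ∧ ∫ x, p x = 1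

/-!
Testing the loss only on densities that take two constant values on two disjoint boxes turns
the hypothesis into an inequality between finitely many values of `f`. Shifting mass between
the two boxes, `ε ↦ f (a + a ε) + f (b - b ε)` is minimal at `ε = 0`, hence `a f'(a) = b f'(b)`:
`p f'(p)` is a constant `c` and `f = c log + f 1` on `(0, ∞)`. Finally the uniform density on a
unit box must do better than the uniform density on the doubled box, i.e. `f 1 ≤ f (1/2)`,
which forces `c ≤ 0`.
-/

open Set Real

section TwoStep

variable {α : Type*} {A B : Set α}

noncomputable def twoStepFun (A B : Set α) (u v : ℝ) : α → ℝ :=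
  fun x => A.indicator (fun _ => u) x + B.indicator (fun _ => v) x

lemma measurable_twoStepFun [MeasurableSpace α] (hA : MeasurableSet A) (hB : MeasurableSet B)
    (u v : ℝ) : Measurable (twoStepFun A B u v) :=
  (measurable_const.indicator hA).add (measurable_const.indicator hB)

lemma twoStepFun_nonneg {u v : ℝ} (hu : 0 ≤ u) (hv : 0 ≤ v) (x : α) :
    0 ≤ twoStepFun A B u v x :=
  add_nonneg (indicator_nonneg (fun _ _ => hu) x) (indicator_nonneg (fun _ _ => hv) x)

lemma integral_twoStepFun [MeasurableSpace α] {μ : Measure α} (hA : MeasurableSet A)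
    (hB : MeasurableSet B) (hμA : μ A ≠ ⊤) (hμB : μ B ≠ ⊤) (u v : ℝ) :
    ∫ x, twoStepFun A B u v x ∂μ = u * μ.real A + v * μ.real B := by
  have hint : ∀ {S : Set α} (c : ℝ), MeasurableSet S → μ S ≠ ⊤ →
      Integrable (S.indicator fun _ => c) μ := fun c hS hμS =>
    (integrable_indicator_iff hS).2 (integrableOn_const hμS)
  unfold twoStepFun
  rw [integral_add (hint u hA hμA) (hint v hB hμB), integral_indicator_const u hA,
    integral_indicator_const v hB, smul_eq_mul, smul_eq_mul, mul_comm u, mul_comm v]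

lemma comp_mul_twoStepFun (hAB : Disjoint A B) (f : ℝ → ℝ) (u v u' v' : ℝ) :
    (fun x => f (twoStepFun A B u' v' x) * twoStepFun A B u v x)
      = twoStepFun A B (f u' * u) (f v' * v) := by
  funext x
  by_cases hxA : x ∈ A
  · have hxB : x ∉ B := hAB.notMem_of_mem_left hxA
    simp [twoStepFun, hxA, hxB]
  · by_cases hxB : x ∈ B <;> simp [twoStepFun, hxA, hxB]

end TwoStep

lemma volume_pi_update_Ico_zero_one {d : ℕ} (i₀ : Fin d) (I : Set ℝ) :
    volume (univ.pi (Function.update (fun _ => Ico (0 : ℝ) 1) i₀ I)) = volume I := by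
  rw [volume_pi_pi, Finset.prod_eq_single i₀ (fun i _ hi => by simp [hi]) (by simp)]
  simp

lemma exists_disjoint_volume_eq {d : ℕ} (hd : 0 < d) (s t : ℝ) :
    ∃ A B : Set (Fin d → ℝ), MeasurableSet A ∧ MeasurableSet B ∧ Disjoint A B ∧
      volume A = ENNReal.ofReal s ∧ volume B = ENNReal.ofReal t := by
  let slab (I : Set ℝ) : Set (Fin d → ℝ) :=
    univ.pi (Function.update (fun _ => Ico (0 : ℝ) 1) ⟨0, hd⟩ I)
  have hmeas : ∀ a b : ℝ, MeasurableSet (slab (Ico a b)) := fun a b =>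
    MeasurableSet.univ_pi fun i => by
      rcases eq_or_ne i ⟨0, hd⟩ with rfl | hi <;> simp [*]
  refine ⟨slab (Ico 0 s), slab (Ico s (s + t)), hmeas _ _, hmeas _ _,
    disjoint_univ_pi.2 ⟨⟨0, hd⟩, by simp [Ico_disjoint_Ico_same]⟩, ?_, ?_⟩ <;>
  · rw [volume_pi_update_Ico_zero_one, Real.volume_Ico]
    congr 1
    ring

lemma isDensityFn_twoStepFun {d : ℕ} {A B : Set (Fin d → ℝ)} (hA : MeasurableSet A)
    (hB : MeasurableSet B) (hμA : volume A ≠ ⊤) (hμB : volume B ≠ ⊤) {u v : ℝ}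
    (hu : 0 ≤ u) (hv : 0 ≤ v) (h : u * volume.real A + v * volume.real B = 1) :
    IsDensityFn d (twoStepFun A B u v) :=
  ⟨measurable_twoStepFun hA hB u v, twoStepFun_nonneg hu hv,
    (integral_twoStepFun hA hB hμA hμB u v).trans h⟩

def IsProperLoss (d : ℕ) (f : ℝ → ℝ) : Prop :=
  ∀ Pstar P : (Fin d → ℝ) → ℝ, IsDensityFn d Pstar → IsDensityFn d P →
    ∫ x, f (Pstar x) * Pstar x ≤ ∫ x, f (P x) * Pstar x

lemma IsProperLoss.twoStep_le {d : ℕ} {f : ℝ → ℝ} (hf : IsProperLoss d f) (hd : 0 < d)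
    {s t a b a' b' : ℝ} (hs : 0 ≤ s) (ht : 0 ≤ t) (ha : 0 ≤ a) (hb : 0 ≤ b) (ha' : 0 ≤ a')
    (hb' : 0 ≤ b') (hab : a * s + b * t = 1) (hab' : a' * s + b' * t = 1) :
    f a * a * s + f b * b * t ≤ f a' * a * s + f b' * b * t := by
  obtain ⟨A, B, hA, hB, hAB, hμA, hμB⟩ := exists_disjoint_volume_eq hd s t
  have hA_fin : volume A ≠ ⊤ := hμA ▸ ENNReal.ofReal_ne_top
  have hB_fin : volume B ≠ ⊤ := hμB ▸ ENNReal.ofReal_ne_top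
  have hA_real : volume.real A = s := by simp [measureReal_def, hμA, hs]
  have hB_real : volume.real B = t := by simp [measureReal_def, hμB, ht]
  have hdens : ∀ {u v : ℝ}, 0 ≤ u → 0 ≤ v → u * s + v * t = 1 →
      IsDensityFn d (twoStepFun A B u v) := fun hu hv huv =>
    isDensityFn_twoStepFun hA hB hA_fin hB_fin hu hv (by rwa [hA_real, hB_real])
  have hloss := hf _ _ (hdens ha hb hab) (hdens ha' hb' hab')
  simp only [comp_mul_twoStepFun hAB] at hloss
  rwa [integral_twoStepFun hA hB hA_fin hB_fin, integral_twoStepFun hA hB hA_fin hB_fin,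
    hA_real, hB_real] at hloss

lemma IsProperLoss.isLocalMin {d : ℕ} {f : ℝ → ℝ} (hf : IsProperLoss d f) (hd : 0 < d)
    {a b : ℝ} (ha : 0 < a) (hb : 0 < b) :
    IsLocalMin (fun ε => f (a + a * ε) + f (b - b * ε)) 0 := by
  filter_upwards [Icc_mem_nhds (neg_lt_zero.2 one_pos) one_pos] with ε hε
  have hsa : a * (2 * a)⁻¹ = 1 / 2 := by field_simp
  have htb : b * (2 * b)⁻¹ = 1 / 2 := by field_simp
  have hle := hf.twoStep_le hd (s := (2 * a)⁻¹) (t := (2 * b)⁻¹) (by positivity)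
    (by positivity) ha.le hb.le (a' := a + a * ε) (b' := b - b * ε)
    (by nlinarith [hε.1]) (by nlinarith [hε.2]) (by rw [hsa, htb]; norm_num)
    (by field_simp; ring)
  simp only [mul_assoc, hsa, htb] at hle
  simp only [mul_zero, add_zero, sub_zero]
  linarith

lemma mul_deriv_eq_of_isLocalMin {f : ℝ → ℝ} {a b : ℝ} (hfa : DifferentiableAt ℝ f a)
    (hfb : DifferentiableAt ℝ f b)
    (hmin : IsLocalMin (fun ε => f (a + a * ε) + f (b - b * ε)) 0) :
    a * deriv f a = b * deriv f b := by
  have hda : HasDerivAt (fun ε : ℝ => a + a * ε) a 0 := by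
    simpa using ((hasDerivAt_id (0 : ℝ)).const_mul a).const_add a
  have hdb : HasDerivAt (fun ε : ℝ => b - b * ε) (-b) 0 := by
    simpa using ((hasDerivAt_id (0 : ℝ)).const_mul b).const_sub b
  have hg := (hfa.hasDerivAt.comp_of_eq 0 hda (by simp)).add
    (hfb.hasDerivAt.comp_of_eq 0 hdb (by simp))
  linarith [hmin.hasDerivAt_eq_zero hg]

lemma eqOn_mul_log_add_of_mul_deriv_eq {f : ℝ → ℝ} {c : ℝ} (hf : DifferentiableOn ℝ f (Ioi 0))
    (h : ∀ p, 0 < p → p * deriv f p = c) :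
    EqOn f (fun p => c * log p + f 1) (Ioi 0) := by
  refine isOpen_Ioi.eqOn_of_deriv_eq isPreconnected_Ioi hf
    (((differentiableOn_log.mono fun p hp => ne_of_gt hp).const_mul c).add_const _)
    (fun p hp => ?_) (mem_Ioi.2 one_pos) (by simp)
  have hp : 0 < p := hp
  rw [deriv_add_const, deriv_const_mul _ (differentiableAt_log hp.ne'), deriv_log, ← h p hp]
  field_simp

/-- If the density-based loss L(P) = ∫ f(P(x)) dP_*(x) is minimized at P = P_* for every
absolutely continuous target P_*, then f(p) = c log p + c' with c ≤ 0. -/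
theorem stmt_0 (d : ℕ) (hd : 0 < d) (f : ℝ → ℝ)
    (hf : ContDiffOn ℝ 1 f (Set.Ioi 0))
    (hmin : ∀ Pstar P : (Fin d → ℝ) → ℝ, IsDensityFn d Pstar → IsDensityFn d P →
      ∫ x, f (Pstar x) * Pstar x ≤ ∫ x, f (P x) * Pstar x) :
    ∃ c c' : ℝ, c ≤ 0 ∧ ∀ p : ℝ, 0 < p → f p = c * Real.log p + c' := by
  have hproper : IsProperLoss d f := hmin
  have hdiffOn : DifferentiableOn ℝ f (Ioi 0) := hf.differentiableOn one_ne_zero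
  have hdiff : ∀ p, 0 < p → DifferentiableAt ℝ f p := fun p hp =>
    hdiffOn.differentiableAt (isOpen_Ioi.mem_nhds hp)
  have hform : EqOn f (fun p => deriv f 1 * log p + f 1) (Ioi 0) :=
    eqOn_mul_log_add_of_mul_deriv_eq hdiffOn fun p hp => by
      simpa using mul_deriv_eq_of_isLocalMin (hdiff p hp) (hdiff 1 one_pos)
        (hproper.isLocalMin hd hp one_pos)
  refine ⟨deriv f 1, f 1, ?_, fun p hp => hform hp⟩
  have hle := hproper.twoStep_le hd (s := 1) (t := 1) (a := 1) (b := 0)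
    (a' := 1 / 2) (b' := 1 / 2) zero_le_one zero_le_one zero_le_one le_rfl (by norm_num)
    (by norm_num) (by norm_num) (by norm_num)
  have hhalf : f 1 ≤ f (1 / 2) := by simpa using hle
  rw [hform (show (1 / 2 : ℝ) ∈ Ioi 0 by norm_num)] at hhalf
  simp only [one_div, log_inv] at hhalf
  nlinarith [log_pos one_lt_two]
end

section
/- (Stationary points of the 1-d Wasserstein dynamics are global minima or singular) Let ℙ be the uniform measure on [0,1] and P_* ∈ 𝒫_{2,ac}(ℝ). For G ∈ L²(ℙ, ℝ), let π be the (unique) optimal transport plan between G#ℙ and P_*, and let m(x) = ∫ x' dπ(x'|x). If G = m∘G (a stationary point of the dynamics dG_t/dt = m_t∘G_t − G_t) and G#ℙ is absolutely continuous, then G#ℙ = P_*. Consequently, any stationary point that is not a global minimizer of W₂²(G#ℙ, P_*) pushes forward ℙ to a singular measure, i.e., there exists x with (G#ℙ)({x}) > 0. -/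
open MeasureTheory

/-- A coupling of two measures on ℝ. -/
def IsCoupling (μ ν : Measure ℝ) (π : Measure (ℝ × ℝ)) : Prop :=
  π.map Prod.fst = μ ∧ π.map Prod.snd = ν

/-- Quadratic transport cost of a coupling. -/
noncomputable def cost2 (π : Measure (ℝ × ℝ)) : ℝ := ∫ p, (p.1 - p.2) ^ 2 ∂π

/-- An optimal transport plan for the quadratic cost. -/
def IsOptimalCoupling (μ ν : Measure ℝ) (π : Measure (ℝ × ℝ)) : Prop :=
  IsCoupling μ ν π ∧ ∀ π' : Measure (ℝ × ℝ), IsProbabilityMeasure π' → IsCoupling μ ν π' →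
    cost2 π ≤ cost2 π'

/-- `m` is the conditional mean x ↦ ∫ x' dπ(x'|x) of the second coordinate given the first. -/
def IsCondMean (π : Measure (ℝ × ℝ)) (m : ℝ → ℝ) : Prop :=
  Measurable m ∧ ∀ s : Set ℝ, MeasurableSet s →
    ∫ p in s ×ˢ (Set.univ : Set ℝ), p.2 ∂π = ∫ x in s, m x ∂(π.map Prod.fst)

/-- The uniform measure on [0,1]. -/
noncomputable def unif01 : Measure ℝ := volume.restrict (Set.Icc 0 1)

/-!
Write `μ = G#ℙ`, `ν = P_*`, and `q_ρ` for the quantile function of `ρ`, a random variable on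
`ℙ` with law `ρ`. Stationarity makes the optimal plan `π` a martingale coupling, `E[Y | X] = X`.
Hence its cost is `E Y² - E X²`, and `μ` is below `ν` in the convex order. Comparing `π` with the
comonotone coupling `(q_μ, q_ν)#ℙ` then gives `∫ q_μ g ≤ 0` for `g = q_ν - q_μ`.

Put `Φ w = ∫_{u > w} g`. The convex order gives `Φ ≥ 0` on `[0,1]`, and Fubini gives
`∫ q_ρ g = ∫ Φ (F_ρ s) ds` for `ρ = μ, ν`, so `Φ ∘ F_μ` vanishes identically. If `μ` has no atoms,
`F_μ` is continuous and its range contains `(0,1)`, so `Φ = 0` on `[0,1]`. Then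
`∫ g² = ∫ q_ν g - ∫ q_μ g = 0`, so `q_μ = q_ν` a.e., and `μ = ν`.
-/

open MeasureTheory ProbabilityTheory Set Filter

noncomputable def layerCakeKernel (x s : ℝ) : ℝ := (Iio x).indicator 1 s - (Iio 0).indicator 1 s

theorem measurable_layerCakeKernel : Measurable (Function.uncurry layerCakeKernel) :=
  (measurable_const.indicator (measurableSet_lt measurable_snd measurable_fst)).sub
    (measurable_const.indicator (measurableSet_Iio.preimage measurable_snd))

theorem layerCakeKernel_eq (x s : ℝ) :
    layerCakeKernel x s = (Ico 0 x).indicator 1 s - (Ico x 0).indicator 1 s := by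
  simp only [layerCakeKernel, indicator_apply, mem_Iio, mem_Ico, Pi.one_apply]
  split_ifs <;> grind

theorem abs_layerCakeKernel (x s : ℝ) :
    |layerCakeKernel x s| = (Ico 0 x).indicator 1 s + (Ico x 0).indicator 1 s := by
  simp only [layerCakeKernel_eq, indicator_apply, mem_Ico, Pi.one_apply]
  split_ifs <;> grind

theorem integrable_indicator_Ico_one (a b : ℝ) : Integrable ((Ico a b).indicator (1 : ℝ → ℝ)) :=
  (integrable_indicator_iff measurableSet_Ico).2 (integrableOn_const measure_Ico_lt_top.ne)

theorem integrable_layerCakeKernel (x : ℝ) : Integrable (layerCakeKernel x) := by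
  rw [show layerCakeKernel x = (Ico 0 x).indicator 1 - (Ico x 0).indicator 1 from
    funext (layerCakeKernel_eq x)]
  exact (integrable_indicator_Ico_one 0 x).sub (integrable_indicator_Ico_one x 0)

theorem integral_layerCakeKernel (x : ℝ) : ∫ s, layerCakeKernel x s = x := by
  simp_rw [layerCakeKernel_eq]
  rw [integral_sub (integrable_indicator_Ico_one 0 x) (integrable_indicator_Ico_one x 0),
    integral_indicator_one measurableSet_Ico, integral_indicator_one measurableSet_Ico,
    Real.volume_real_Ico, Real.volume_real_Ico]
  rcases le_total 0 x with hx | hx <;> simp [hx]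

theorem integral_abs_layerCakeKernel (x : ℝ) : ∫ s, |layerCakeKernel x s| = |x| := by
  simp_rw [abs_layerCakeKernel]
  rw [integral_add (integrable_indicator_Ico_one 0 x) (integrable_indicator_Ico_one x 0),
    integral_indicator_one measurableSet_Ico, integral_indicator_one measurableSet_Ico,
    Real.volume_real_Ico, Real.volume_real_Ico]
  rcases le_total 0 x with hx | hx <;> simp [hx, abs_of_nonneg, abs_of_nonpos]

-- A signed layer-cake formula: `∫ g = 0` turns the layers below `0` into superlevel sets as well.
theorem integral_mul_eq_integral_setIntegral_lt {α : Type*} [MeasurableSpace α] {ρ : Measure α}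
    [SFinite ρ] {f g : α → ℝ} (hf : Measurable f) (hg : Integrable g ρ)
    (hfg : Integrable (fun a => f a * g a) ρ) (hg0 : ∫ a, g a ∂ρ = 0) :
    Integrable (fun s => ∫ a in {a | s < f a}, g a ∂ρ) ∧
      ∫ a, f a * g a ∂ρ = ∫ s, ∫ a in {a | s < f a}, g a ∂ρ := by
  set K : α → ℝ → ℝ := fun a s => layerCakeKernel (f a) s * g a
  have hKm : AEStronglyMeasurable (Function.uncurry K) (ρ.prod volume) :=
    (measurable_layerCakeKernel.comp ((hf.comp measurable_fst).prodMk
      measurable_snd)).aestronglyMeasurable.mul hg.1.comp_fst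
  have hK : Integrable (Function.uncurry K) (ρ.prod volume) := by
    refine (integrable_prod_iff hKm).2 ⟨ae_of_all _ fun a => ?_, ?_⟩
    · exact (integrable_layerCakeKernel (f a)).mul_const (g a)
    · refine hfg.norm.congr (ae_of_all _ fun a => ?_)
      simp only [Function.uncurry_apply_pair, K, norm_mul, Real.norm_eq_abs, integral_mul_const,
        integral_abs_layerCakeKernel]
  have hslice : ∀ s, ∫ a, K a s ∂ρ = ∫ a in {a | s < f a}, g a ∂ρ := fun s => by
    have hmeas : MeasurableSet {a | s < f a} := measurableSet_lt measurable_const hf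
    have hKs : (fun a => K a s) =
        fun a => {a | s < f a}.indicator g a - (Iio 0).indicator 1 s * g a := by
      ext a
      simp only [K, layerCakeKernel, indicator_apply, mem_ofPred_eq, mem_Iio, Pi.one_apply]
      split_ifs <;> ring
    rw [hKs, integral_sub (hg.indicator hmeas) (hg.const_mul _), integral_const_mul, hg0,
      mul_zero, sub_zero, integral_indicator hmeas]
  refine ⟨?_, ?_⟩
  · simpa only [Function.uncurry_apply_pair, hslice] using hK.integral_prod_right
  · calc ∫ a, f a * g a ∂ρ = ∫ a, (∫ s, K a s) ∂ρ := by
          simp only [K, integral_mul_const, integral_layerCakeKernel]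
      _ = ∫ s, ∫ a, K a s ∂ρ := integral_integral_swap hK
      _ = ∫ s, ∫ a in {a | s < f a}, g a ∂ρ := by simp only [hslice]

theorem ae_eq_of_integral_mul_sub_eq_zero {α : Type*} [MeasurableSpace α] {μ : Measure α}
    {f₁ f₂ : α → ℝ} (h₁ : MemLp f₁ 2 μ) (h₂ : MemLp f₂ 2 μ)
    (hf₁ : ∫ a, f₁ a * (f₂ a - f₁ a) ∂μ = 0) (hf₂ : ∫ a, f₂ a * (f₂ a - f₁ a) ∂μ = 0) :
    f₁ =ᵐ[μ] f₂ := by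
  have hg := h₂.sub h₁
  have hsq : ∫ a, (f₂ a - f₁ a) ^ 2 ∂μ = 0 := by
    have h₁g : Integrable (fun a => f₁ a * (f₂ a - f₁ a)) μ := h₁.integrable_mul hg
    have h₂g : Integrable (fun a => f₂ a * (f₂ a - f₁ a)) μ := h₂.integrable_mul hg
    calc ∫ a, (f₂ a - f₁ a) ^ 2 ∂μ = ∫ a, (f₂ a * (f₂ a - f₁ a) - f₁ a * (f₂ a - f₁ a)) ∂μ := by
          congr with a; ring
      _ = 0 := by rw [integral_sub h₂g h₁g, hf₁, hf₂, sub_self]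
  filter_upwards [(integral_eq_zero_iff_of_nonneg (fun a => sq_nonneg _) hg.integrable_sq).1 hsq]
    with a ha
  exact (sub_eq_zero.1 (pow_eq_zero_iff two_ne_zero |>.1 ha)).symm

instance : IsProbabilityMeasure unif01 :=
  ⟨by simp [unif01]⟩

instance : NullSingletonClass unif01 := by
  unfold unif01; infer_instance

theorem unif01_eq_restrict_Ioo : unif01 = volume.restrict (Ioo 0 1) :=
  (Measure.restrict_congr_set Ioo_ae_eq_Icc).symm

theorem ae_mem_Ioo_unif01 : ∀ᵐ u ∂unif01, u ∈ Ioo (0 : ℝ) 1 := by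
  rw [unif01_eq_restrict_Ioo]
  exact ae_restrict_mem measurableSet_Ioo

namespace ProbabilityTheory

noncomputable def quantile (μ : Measure ℝ) (u : ℝ) : ℝ :=
  if u ∈ Ioo 0 1 then sInf {x | u ≤ cdf μ x} else 0

variable {μ : Measure ℝ} {u x : ℝ}

theorem le_cdf_iff_quantile_le (hu : u ∈ Ioo 0 1) : u ≤ cdf μ x ↔ quantile μ u ≤ x := by
  have hne : {x | u ≤ cdf μ x}.Nonempty :=
    ((tendsto_cdf_atTop μ).eventually_const_le hu.2).exists
  have hbdd : BddBelow {x | u ≤ cdf μ x} := by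
    obtain ⟨x₀, hx₀⟩ := eventually_atBot.1 ((tendsto_cdf_atBot μ).eventually_lt_const hu.1)
    exact ⟨x₀, fun y hy => le_of_not_gt fun hyx => (hx₀ y hyx.le).not_ge hy⟩
  rw [quantile, if_pos hu]
  refine ⟨fun hx => csInf_le hbdd hx, fun hx => ?_⟩
  have hright : ∀ z, x < z → u ≤ cdf μ z := fun z hz => by
    obtain ⟨y, hy, hyz⟩ := (csInf_lt_iff hbdd hne).1 (hx.trans_lt hz)
    exact hy.trans (monotone_cdf μ hyz.le)
  exact ge_of_tendsto ((cdf μ).right_continuous x |>.mono_left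
    (nhdsWithin_mono x Ioi_subset_Ici_self)) (eventually_nhdsWithin_of_forall hright)

theorem cdf_lt_iff_lt_quantile (hu : u ∈ Ioo 0 1) : cdf μ x < u ↔ x < quantile μ u := by
  simpa only [not_le] using (le_cdf_iff_quantile_le (μ := μ) (x := x) hu).not

theorem setIntegral_lt_quantile (g : ℝ → ℝ) (s : ℝ) :
    ∫ u in {u | s < quantile μ u}, g u ∂unif01 = ∫ u in Ioi (cdf μ s), g u ∂unif01 := by
  refine setIntegral_congr_set ?_
  filter_upwards [ae_mem_Ioo_unif01] with u hu
  exact propext (cdf_lt_iff_lt_quantile hu).symm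

theorem monotoneOn_quantile : MonotoneOn (quantile μ) (Ioo 0 1) := fun _ hu _ hv huv =>
  (le_cdf_iff_quantile_le hu).1 (huv.trans ((le_cdf_iff_quantile_le hv).2 le_rfl))

theorem quantile_preimage_Iic_inter (t : ℝ) :
    quantile μ ⁻¹' Iic t ∩ Ioo 0 1 = Iic (cdf μ t) ∩ Ioo 0 1 := by
  ext u
  simp only [mem_inter_iff, mem_preimage, mem_Iic, and_congr_left_iff]
  exact fun hu => (le_cdf_iff_quantile_le hu).symm

theorem measurable_quantile : Measurable (quantile μ) := by
  refine measurable_of_Iic fun t => ?_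
  have hsplit : quantile μ ⁻¹' Iic t =
      (quantile μ ⁻¹' Iic t ∩ Ioo 0 1) ∪ (quantile μ ⁻¹' Iic t ∩ (Ioo 0 1)ᶜ) :=
    (inter_union_compl _ _).symm
  have houtside : quantile μ ⁻¹' Iic t ∩ (Ioo 0 1)ᶜ = {_u | (0 : ℝ) ≤ t} ∩ (Ioo 0 1)ᶜ := by
    ext u
    simp only [mem_inter_iff, mem_preimage, mem_Iic, mem_compl_iff, mem_ofPred_eq,
      and_congr_left_iff]
    intro hu
    rw [quantile, if_neg hu]
  rw [hsplit, quantile_preimage_Iic_inter, houtside]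
  exact (measurableSet_Iic.inter measurableSet_Ioo).union
    ((MeasurableSet.const _).inter measurableSet_Ioo.compl)

theorem continuous_cdf [IsProbabilityMeasure μ] [NullSingletonClass μ] : Continuous (cdf μ) := by
  refine continuous_iff_continuousAt.2 fun x => ?_
  rw [(monotone_cdf μ).continuousAt_iff_leftLim_eq_rightLim, (cdf μ).rightLim_eq]
  have h := (cdf μ).measure_singleton x
  rw [measure_cdf, measure_singleton, eq_comm, ENNReal.ofReal_eq_zero, sub_nonpos] at h
  exact le_antisymm ((monotone_cdf μ).leftLim_le le_rfl) h

theorem mem_range_cdf [IsProbabilityMeasure μ] [NullSingletonClass μ] {w : ℝ}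
    (hw : w ∈ Ioo 0 1) : w ∈ range (cdf μ) :=
  mem_range_of_exists_le_of_exists_ge continuous_cdf
    ((tendsto_cdf_atBot μ).eventually_le_const hw.1).exists
    ((tendsto_cdf_atTop μ).eventually_const_le hw.2).exists

-- This is where the absence of atoms enters: `cdf μ` is continuous and its range covers `(0, 1)`.
theorem eq_zero_of_integral_comp_cdf_nonpos [IsProbabilityMeasure μ] [NullSingletonClass μ]
    {Φ : ℝ → ℝ} (hΦ : ContinuousOn Φ (Icc 0 1)) (hΦ_nonneg : ∀ w ∈ Ioo 0 1, 0 ≤ Φ w)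
    (hint : Integrable fun s => Φ (cdf μ s)) (hle : ∫ s, Φ (cdf μ s) ≤ 0) :
    ∀ w ∈ Icc 0 1, Φ w = 0 := by
  have hclosure : closure (Ioo (0 : ℝ) 1) = Icc 0 1 := closure_Ioo zero_ne_one
  have hcdf (s : ℝ) : cdf μ s ∈ Icc 0 1 := ⟨cdf_nonneg μ s, cdf_le_one μ s⟩
  have hnonneg : MapsTo Φ (Icc 0 1) (Ici 0) := by
    simpa only [hclosure, isClosed_Ici.closure_eq] using
      MapsTo.closure_of_continuousOn (t := Ici 0) (fun w hw => mem_Ici.2 (hΦ_nonneg w hw))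
        (hclosure ▸ hΦ)
  have hcomp_nonneg : 0 ≤ fun s => Φ (cdf μ s) := fun s => hnonneg (hcdf s)
  have hcomp : (fun s => Φ (cdf μ s)) = 0 := by
    refine (Continuous.ae_eq_iff_eq volume ?_ continuous_const).1 <|
      (integral_eq_zero_iff_of_nonneg hcomp_nonneg hint).1
        (hle.antisymm (integral_nonneg hcomp_nonneg))
    exact hΦ.comp_continuous continuous_cdf hcdf
  have hzero : MapsTo Φ (Ioo 0 1) {0} := fun w hw => by
    obtain ⟨s, rfl⟩ := mem_range_cdf (μ := μ) hw
    exact congrFun hcomp s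
  intro w hw
  simpa only [closure_singleton, mem_singleton_iff] using
    MapsTo.closure_of_continuousOn hzero (hclosure ▸ hΦ) (hclosure ▸ hw)

section ProbabilityMeasure

variable [IsProbabilityMeasure μ]

theorem map_quantile : unif01.map (quantile μ) = μ := by
  rw [unif01_eq_restrict_Ioo]
  refine Measure.ext_of_Iic _ _ fun t => ?_
  rw [Measure.map_apply measurable_quantile measurableSet_Iic,
    Measure.restrict_apply (measurable_quantile measurableSet_Iic), quantile_preimage_Iic_inter,
    ← ofReal_cdf]
  apply le_antisymm
  · calc volume (Iic (cdf μ t) ∩ Ioo 0 1) ≤ volume (Ioc 0 (cdf μ t)) :=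
          measure_mono fun u hu => ⟨hu.2.1, hu.1⟩
      _ = ENNReal.ofReal (cdf μ t) := by rw [Real.volume_Ioc, sub_zero]
  · calc ENNReal.ofReal (cdf μ t) = volume (Ioo 0 (cdf μ t)) := by rw [Real.volume_Ioo, sub_zero]
      _ ≤ volume (Iic (cdf μ t) ∩ Ioo 0 1) :=
          measure_mono fun u hu => ⟨hu.2.le, hu.1, hu.2.trans_le (cdf_le_one μ t)⟩

theorem integral_comp_quantile {φ : ℝ → ℝ} (hφ : AEStronglyMeasurable φ μ) :
    ∫ u, φ (quantile μ u) ∂unif01 = ∫ x, φ x ∂μ := by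
  have hmap := map_quantile (μ := μ)
  rw [← hmap] at hφ
  rw [← integral_map measurable_quantile.aemeasurable hφ, hmap]

theorem integral_quantile : ∫ u, quantile μ u ∂unif01 = ∫ x, x ∂μ :=
  integral_comp_quantile measurable_id'.aestronglyMeasurable

theorem memLp_quantile {p : ENNReal} (hμ : MemLp id p μ) : MemLp (quantile μ) p unif01 := by
  rw [← map_quantile (μ := μ)] at hμ
  exact (memLp_map_measure_iff aestronglyMeasurable_id measurable_quantile.aemeasurable).1 hμ

theorem integrable_quantile (hμ : Integrable id μ) : Integrable (quantile μ) unif01 :=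
  memLp_one_iff_integrable.1 (memLp_quantile (memLp_one_iff_integrable.2 hμ))

theorem integral_quantile_mul_eq (hμ : MemLp id 2 μ) {g : ℝ → ℝ} (hg : MemLp g 2 unif01)
    (hg0 : ∫ u, g u ∂unif01 = 0) :
    Integrable (fun s => ∫ u in Ioi (cdf μ s), g u ∂unif01) ∧
      ∫ u, quantile μ u * g u ∂unif01 = ∫ s, ∫ u in Ioi (cdf μ s), g u ∂unif01 := by
  simpa only [setIntegral_lt_quantile] using
    integral_mul_eq_integral_setIntegral_lt measurable_quantile (hg.integrable one_le_two)
      ((memLp_quantile hμ).integrable_mul hg) hg0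

end ProbabilityMeasure

end ProbabilityTheory

/-- The call-function characterization of the convex order `μ ≤cx ν` of integrable measures. -/
def ConvexLE (μ ν : Measure ℝ) : Prop :=
  ∫ x, x ∂μ = ∫ x, x ∂ν ∧ ∀ t, ∫ x, max (x - t) 0 ∂μ ≤ ∫ x, max (x - t) 0 ∂ν

namespace ConvexLE

variable {μ ν : Measure ℝ} [IsProbabilityMeasure μ] [IsProbabilityMeasure ν]

theorem integral_quantile_sub (h : ConvexLE μ ν) (hμ : Integrable id μ) (hν : Integrable id ν) :
    ∫ u, (quantile ν u - quantile μ u) ∂unif01 = 0 := by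
  rw [integral_sub (integrable_quantile hν) (integrable_quantile hμ), integral_quantile,
    integral_quantile]
  exact sub_eq_zero.2 h.1.symm

theorem setIntegral_Ioi_quantile_sub_nonneg (h : ConvexLE μ ν) (hμ : Integrable id μ)
    (hν : Integrable id ν) {w : ℝ} (hw : w ∈ Ioo 0 1) :
    0 ≤ ∫ u in Ioi w, (quantile ν u - quantile μ u) ∂unif01 := by
  set q := quantile μ
  set r := quantile ν
  -- Since `r` is monotone, `(r - t)⁺ = (r - t) 1_{u > w}` for this choice of `t`.
  set t := r w
  have hcall : Measurable fun x : ℝ => max (x - t) 0 := by fun_prop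
  have hq : Integrable (fun u => q u - t) unif01 :=
    (integrable_quantile hμ).sub (integrable_const t)
  have hr : Integrable (fun u => r u - t) unif01 :=
    (integrable_quantile hν).sub (integrable_const t)
  have hr_call : ∫ u, max (r u - t) 0 ∂unif01 = ∫ u in Ioi w, (r u - t) ∂unif01 := by
    rw [← integral_indicator measurableSet_Ioi]
    refine integral_congr_ae ?_
    filter_upwards [ae_mem_Ioo_unif01] with u hu
    rcases lt_or_ge w u with hwu | huw
    · rw [indicator_of_mem (show u ∈ Ioi w from hwu), max_eq_left]
      exact sub_nonneg.2 (monotoneOn_quantile hw hu hwu.le)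
    · rw [indicator_of_notMem (show u ∉ Ioi w from not_lt.2 huw), max_eq_right]
      exact sub_nonpos.2 (monotoneOn_quantile hu hw huw)
  have hcompare : ∫ u in Ioi w, (q u - t) ∂unif01 ≤ ∫ u in Ioi w, (r u - t) ∂unif01 :=
    calc ∫ u in Ioi w, (q u - t) ∂unif01
        ≤ ∫ u in Ioi w, max (q u - t) 0 ∂unif01 :=
          setIntegral_mono hq.integrableOn hq.pos_part.integrableOn fun u => le_max_left _ _
      _ ≤ ∫ u, max (q u - t) 0 ∂unif01 :=
          setIntegral_le_integral hq.pos_part (ae_of_all _ fun u => le_max_right _ _)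
      _ ≤ ∫ u, max (r u - t) 0 ∂unif01 := by
          rw [integral_comp_quantile hcall.aestronglyMeasurable,
            integral_comp_quantile hcall.aestronglyMeasurable]
          exact h.2 t
      _ = ∫ u in Ioi w, (r u - t) ∂unif01 := hr_call
  calc 0 ≤ ∫ u in Ioi w, (r u - t) ∂unif01 - ∫ u in Ioi w, (q u - t) ∂unif01 :=
        sub_nonneg.2 hcompare
    _ = ∫ u in Ioi w, (r u - q u) ∂unif01 := by
        rw [← integral_sub hr.integrableOn hq.integrableOn]
        congr with u
        ring

theorem quantile_ae_eq [NullSingletonClass μ] (h : ConvexLE μ ν) (hμ : MemLp id 2 μ)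
    (hν : MemLp id 2 ν)
    (hopt : ∫ u, quantile μ u * (quantile ν u - quantile μ u) ∂unif01 ≤ 0) :
    quantile μ =ᵐ[unif01] quantile ν := by
  set g : ℝ → ℝ := fun u => quantile ν u - quantile μ u
  set Φ : ℝ → ℝ := fun w => ∫ u in Ioi w, g u ∂unif01
  have hμ₁ := hμ.integrable one_le_two
  have hν₁ := hν.integrable one_le_two
  have hg : MemLp g 2 unif01 := (memLp_quantile hν).sub (memLp_quantile hμ)
  have hlayer (ρ : Measure ℝ) [IsProbabilityMeasure ρ] (hρ : MemLp id 2 ρ) :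
      Integrable (fun s => Φ (cdf ρ s)) ∧ ∫ u, quantile ρ u * g u ∂unif01 = ∫ s, Φ (cdf ρ s) :=
    integral_quantile_mul_eq hρ hg (h.integral_quantile_sub hμ₁ hν₁)
  have hΦ : ∀ w ∈ Icc 0 1, Φ w = 0 :=
    eq_zero_of_integral_comp_cdf_nonpos (μ := μ)
      ((hg.integrable one_le_two).integrableOn.continuousOn_Ici_primitive_Ioi.mono
        Icc_subset_Ici_self)
      (fun w hw => h.setIntegral_Ioi_quantile_sub_nonneg hμ₁ hν₁ hw)
      (hlayer μ hμ).1 ((hlayer μ hμ).2 ▸ hopt)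
  have hvanish (ρ : Measure ℝ) [IsProbabilityMeasure ρ] (hρ : MemLp id 2 ρ) :
      ∫ u, quantile ρ u * g u ∂unif01 = 0 := by
    simp only [(hlayer ρ hρ).2, hΦ _ ⟨cdf_nonneg ρ _, cdf_le_one ρ _⟩, integral_zero]
  exact ae_eq_of_integral_mul_sub_eq_zero (memLp_quantile hμ) (memLp_quantile hν)
    (hvanish μ hμ) (hvanish ν hν)

end ConvexLE

namespace IsCoupling

variable {μ ν : Measure ℝ} {π : Measure (ℝ × ℝ)}

theorem memLp_fst {p : ENNReal} (hc : IsCoupling μ ν π) (hμ : MemLp id p μ) :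
    MemLp Prod.fst p π := by
  rw [← hc.1] at hμ
  exact (memLp_map_measure_iff aestronglyMeasurable_id measurable_fst.aemeasurable).1 hμ

theorem memLp_snd {p : ENNReal} (hc : IsCoupling μ ν π) (hν : MemLp id p ν) :
    MemLp Prod.snd p π := by
  rw [← hc.2] at hν
  exact (memLp_map_measure_iff aestronglyMeasurable_id measurable_snd.aemeasurable).1 hν

theorem integral_comp_fst (hc : IsCoupling μ ν π) {φ : ℝ → ℝ} (hφ : Measurable φ) :
    ∫ p, φ p.1 ∂π = ∫ x, φ x ∂μ := by
  rw [← hc.1, integral_map measurable_fst.aemeasurable hφ.aestronglyMeasurable]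

theorem integral_comp_snd (hc : IsCoupling μ ν π) {φ : ℝ → ℝ} (hφ : Measurable φ) :
    ∫ p, φ p.2 ∂π = ∫ y, φ y ∂ν := by
  rw [← hc.2, integral_map measurable_snd.aemeasurable hφ.aestronglyMeasurable]

end IsCoupling

/-- `E_π[Y | X] = X` for `(X, Y) ∼ π`. -/
def IsMartingaleCoupling (π : Measure (ℝ × ℝ)) : Prop :=
  ∀ s : Set ℝ, MeasurableSet s → ∫ p in s ×ˢ univ, p.2 ∂π = ∫ p in s ×ˢ univ, p.1 ∂π

namespace IsMartingaleCoupling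

variable {μ ν : Measure ℝ} {π : Measure (ℝ × ℝ)} [IsProbabilityMeasure π]

theorem condExp_snd (hπ : IsMartingaleCoupling π) (hX : Integrable Prod.fst π)
    (hY : Integrable Prod.snd π) :
    π[Prod.snd | MeasurableSpace.comap Prod.fst inferInstance] =ᵐ[π] Prod.fst := by
  refine (ae_eq_condExp_of_forall_setIntegral_eq measurable_fst.comap_le hY
    (fun _ _ _ => hX.integrableOn) ?_ (comap_measurable Prod.fst).aestronglyMeasurable).symm
  rintro _ ⟨s, hs, rfl⟩ -
  rw [← prod_univ]
  exact (hπ s hs).symm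

theorem integral_fst_mul_snd (hπ : IsMartingaleCoupling π) (hX : MemLp Prod.fst 2 π)
    (hY : MemLp Prod.snd 2 π) : ∫ p, p.1 * p.2 ∂π = ∫ p, p.1 ^ 2 ∂π := by
  have hXY : Integrable (Prod.fst * Prod.snd) π := hX.integrable_mul hY
  calc ∫ p, p.1 * p.2 ∂π
      = ∫ p, (π[Prod.fst * Prod.snd | MeasurableSpace.comap Prod.fst inferInstance]) p ∂π :=
        (integral_condExp measurable_fst.comap_le).symm
    _ = ∫ p, p.1 * p.1 ∂π := integral_congr_ae <|
        (condExp_mul_of_stronglyMeasurable_left (comap_measurable Prod.fst).stronglyMeasurable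
          hXY (hY.integrable one_le_two)).trans
        (hπ.condExp_snd (hX.integrable one_le_two) (hY.integrable one_le_two)).mul_left
    _ = ∫ p, p.1 ^ 2 ∂π := by simp only [sq]

theorem cost2_eq (hπ : IsMartingaleCoupling π) (hc : IsCoupling μ ν π) (hμ : MemLp id 2 μ)
    (hν : MemLp id 2 ν) : cost2 π = ∫ y, y ^ 2 ∂ν - ∫ x, x ^ 2 ∂μ := by
  have hX := hc.memLp_fst hμ
  have hY := hc.memLp_snd hν
  have hX2 : Integrable (fun p : ℝ × ℝ => p.1 ^ 2) π := hX.integrable_sq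
  have hY2 : Integrable (fun p : ℝ × ℝ => p.2 ^ 2) π := hY.integrable_sq
  have hsum : Integrable (fun p : ℝ × ℝ => p.2 ^ 2 + p.1 ^ 2) π := hY2.add hX2
  have hXY : Integrable (fun p : ℝ × ℝ => p.1 * p.2) π := hX.integrable_mul hY
  calc cost2 π = ∫ p, (p.2 ^ 2 + p.1 ^ 2 - 2 * (p.1 * p.2)) ∂π := by
        unfold cost2; congr with p; ring
    _ = ∫ p, p.2 ^ 2 ∂π - ∫ p, p.1 ^ 2 ∂π := by
        rw [integral_sub hsum (hXY.const_mul 2), integral_add hY2 hX2, integral_const_mul,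
          hπ.integral_fst_mul_snd hX hY]
        ring
    _ = ∫ y, y ^ 2 ∂ν - ∫ x, x ^ 2 ∂μ := by
        rw [hc.integral_comp_fst (φ := fun x => x ^ 2) (by fun_prop),
          hc.integral_comp_snd (φ := fun x => x ^ 2) (by fun_prop)]

theorem convexLE (hπ : IsMartingaleCoupling π) (hc : IsCoupling μ ν π) (hμ : Integrable id μ)
    (hν : Integrable id ν) : ConvexLE μ ν := by
  have hX : Integrable Prod.fst π := memLp_one_iff_integrable.1 <|
    hc.memLp_fst (memLp_one_iff_integrable.2 hμ)
  have hY : Integrable Prod.snd π := memLp_one_iff_integrable.1 <|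
    hc.memLp_snd (memLp_one_iff_integrable.2 hν)
  refine ⟨?_, fun t => ?_⟩
  · rw [← hc.integral_comp_fst measurable_id', ← hc.integral_comp_snd measurable_id']
    simpa only [univ_prod_univ, Measure.restrict_univ] using (hπ univ .univ).symm
  have hcall : Measurable fun x : ℝ => max (x - t) 0 := by fun_prop
  have hS : MeasurableSet (Ioi t ×ˢ univ : Set (ℝ × ℝ)) := measurableSet_Ioi.prod .univ
  have hYt : Integrable (fun p : ℝ × ℝ => p.2 - t) π := hY.sub (integrable_const t)
  calc ∫ x, max (x - t) 0 ∂μ = ∫ p, max (p.1 - t) 0 ∂π := (hc.integral_comp_fst hcall).symm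
    _ = ∫ p in Ioi t ×ˢ univ, (p.1 - t) ∂π := by
        rw [← setIntegral_eq_integral_of_forall_compl_eq_zero fun p hp => ?_]
        · refine setIntegral_congr_fun hS fun p hp => max_eq_left (sub_nonneg.2 hp.1.le)
        · exact max_eq_right (sub_nonpos.2 (not_lt.1 fun h => hp ⟨h, trivial⟩))
    _ = ∫ p in Ioi t ×ˢ univ, (p.2 - t) ∂π := by
        rw [integral_sub hX.integrableOn (integrable_const t).integrableOn,
          integral_sub hY.integrableOn (integrable_const t).integrableOn, ← hπ _ measurableSet_Ioi]
    _ ≤ ∫ p in Ioi t ×ˢ univ, max (p.2 - t) 0 ∂π :=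
        setIntegral_mono hYt.integrableOn hYt.pos_part.integrableOn fun p => le_max_left _ _
    _ ≤ ∫ p, max (p.2 - t) 0 ∂π :=
        setIntegral_le_integral hYt.pos_part (ae_of_all _ fun p => le_max_right _ _)
    _ = ∫ y, max (y - t) 0 ∂ν := hc.integral_comp_snd hcall

end IsMartingaleCoupling

section QuantileCoupling

theorem measurable_quantile_prod {μ ν : Measure ℝ} :
    Measurable fun u => (quantile μ u, quantile ν u) :=
  measurable_quantile.prodMk measurable_quantile

theorem cost2_quantile {μ ν : Measure ℝ} :
    cost2 (unif01.map fun u => (quantile μ u, quantile ν u)) =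
      ∫ u, (quantile μ u - quantile ν u) ^ 2 ∂unif01 :=
  integral_map measurable_quantile_prod.aemeasurable (by fun_prop)

variable {μ ν : Measure ℝ} [IsProbabilityMeasure μ] [IsProbabilityMeasure ν]

theorem isCoupling_quantile :
    IsCoupling μ ν (unif01.map fun u => (quantile μ u, quantile ν u)) :=
  ⟨by rw [Measure.map_map measurable_fst measurable_quantile_prod]; exact map_quantile,
    by rw [Measure.map_map measurable_snd measurable_quantile_prod]; exact map_quantile⟩

theorem IsOptimalCoupling.integral_quantile_mul_sub_nonpos {π : Measure (ℝ × ℝ)}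
    [IsProbabilityMeasure π] (hopt : IsOptimalCoupling μ ν π) (hπ : IsMartingaleCoupling π)
    (hμ : MemLp id 2 μ) (hν : MemLp id 2 ν) :
    ∫ u, quantile μ u * (quantile ν u - quantile μ u) ∂unif01 ≤ 0 := by
  set q := quantile μ
  set r := quantile ν
  have hq2 : Integrable (fun u => q u ^ 2) unif01 := (memLp_quantile hμ).integrable_sq
  have hr2 : Integrable (fun u => r u ^ 2) unif01 := (memLp_quantile hν).integrable_sq
  have hdiff : Integrable (fun u => r u ^ 2 - q u ^ 2) unif01 := hr2.sub hq2
  have hqr2 : Integrable (fun u => (q u - r u) ^ 2) unif01 :=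
    ((memLp_quantile hμ).sub (memLp_quantile hν)).integrable_sq
  have hle := hopt.2 _ (Measure.isProbabilityMeasure_map measurable_quantile_prod.aemeasurable)
    isCoupling_quantile
  rw [hπ.cost2_eq hopt.1 hμ hν, cost2_quantile,
    ← integral_comp_quantile (μ := μ) (φ := fun x => x ^ 2) (by fun_prop),
    ← integral_comp_quantile (μ := ν) (φ := fun x => x ^ 2) (by fun_prop)] at hle
  calc ∫ u, q u * (r u - q u) ∂unif01
      = ∫ u, (r u ^ 2 - q u ^ 2 - (q u - r u) ^ 2) / 2 ∂unif01 := by congr with u; ring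
    _ = (∫ u, r u ^ 2 ∂unif01 - ∫ u, q u ^ 2 ∂unif01 - ∫ u, (q u - r u) ^ 2 ∂unif01) / 2 := by
        rw [integral_div, integral_sub hdiff hqr2, integral_sub hr2 hq2]
    _ ≤ 0 := by linarith

end QuantileCoupling

theorem eq_of_isOptimalCoupling_of_isMartingaleCoupling {μ ν : Measure ℝ}
    [IsProbabilityMeasure μ] [IsProbabilityMeasure ν] [NullSingletonClass μ]
    (hμ : MemLp id 2 μ) (hν : MemLp id 2 ν) {π : Measure (ℝ × ℝ)} [IsProbabilityMeasure π]
    (hopt : IsOptimalCoupling μ ν π) (hπ : IsMartingaleCoupling π) : μ = ν := by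
  have hcx := hπ.convexLE hopt.1 (hμ.integrable one_le_two) (hν.integrable one_le_two)
  have hq := hcx.quantile_ae_eq hμ hν (hopt.integral_quantile_mul_sub_nonpos hπ hμ hν)
  rw [← map_quantile (μ := μ), ← map_quantile (μ := ν)]
  exact Measure.map_congr hq

theorem IsCondMean.isMartingaleCoupling {π : Measure (ℝ × ℝ)} {m : ℝ → ℝ} (hm : IsCondMean π m)
    (hfix : ∀ᵐ x ∂π.map Prod.fst, m x = x) : IsMartingaleCoupling π := fun s hs => by
  rw [hm.2 s hs, setIntegral_congr_ae hs (hfix.mono fun x hx _ => hx),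
    setIntegral_map hs measurable_id'.aestronglyMeasurable measurable_fst.aemeasurable, prod_univ]

theorem stmt_12_general
    (Pstar : Measure ℝ) [IsProbabilityMeasure Pstar]
    (h2 : Integrable (fun x => x ^ 2) Pstar)
    (G : ℝ → ℝ) (hGmeas : Measurable G) (hG2 : MemLp G 2 unif01)
    (π : Measure (ℝ × ℝ)) [IsProbabilityMeasure π]
    (hopt : IsOptimalCoupling (unif01.map G) Pstar π)
    (m : ℝ → ℝ) (hm : IsCondMean π m)
    (hstat : ∀ᵐ z ∂unif01, m (G z) = G z) :
    ((unif01.map G) ≪ volume → unif01.map G = Pstar) ∧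
    (unif01.map G ≠ Pstar → ∃ x : ℝ, 0 < unif01.map G {x}) := by
  have : IsProbabilityMeasure (unif01.map G) := Measure.isProbabilityMeasure_map hGmeas.aemeasurable
  have hμ : MemLp id 2 (unif01.map G) :=
    (memLp_map_measure_iff aestronglyMeasurable_id hGmeas.aemeasurable).2 hG2
  have hν : MemLp id 2 Pstar := (memLp_two_iff_integrable_sq aestronglyMeasurable_id).2 h2
  have hπ : IsMartingaleCoupling π := hm.isMartingaleCoupling <| by
    rwa [hopt.1.1, ae_map_iff hGmeas.aemeasurable (measurableSet_eq_fun hm.1 measurable_id')]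
  have hatomless : NullSingletonClass (unif01.map G) → unif01.map G = Pstar := fun _ =>
    eq_of_isOptimalCoupling_of_isMartingaleCoupling hμ hν hopt hπ
  refine ⟨fun hac => hatomless ⟨fun x => hac (measure_singleton x)⟩, fun hne => ?_⟩
  by_contra! hnoatom
  exact hne (hatomless ⟨fun x => nonpos_iff_eq_zero.1 (hnoatom x)⟩)

/-- Stationary points of the 1-d Wasserstein dynamics: if G = m∘G ℙ-a.e. (so G is a
stationary point of dG_t/dt = m_t∘G_t − G_t) and G#ℙ is absolutely continuous, then
G#ℙ = P_*; consequently a stationary point that is not a global minimizer pushes ℙ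
forward to a measure with an atom. -/
theorem stmt_12
    (Pstar : Measure ℝ) [IsProbabilityMeasure Pstar] (hac : Pstar ≪ volume)
    (h2 : Integrable (fun x => x ^ 2) Pstar)
    (G : ℝ → ℝ) (hGmeas : Measurable G) (hG2 : MemLp G 2 unif01)
    (π : Measure (ℝ × ℝ)) [IsProbabilityMeasure π]
    (hopt : IsOptimalCoupling (unif01.map G) Pstar π)
    (m : ℝ → ℝ) (hm : IsCondMean π m)
    (hstat : ∀ᵐ z ∂unif01, m (G z) = G z) :
    ((unif01.map G) ≪ volume → unif01.map G = Pstar) ∧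
    (unif01.map G ≠ Pstar → ∃ x : ℝ, 0 < unif01.map G {x}) :=
  stmt_12_general Pstar h2 G hGmeas hG2 π hopt m hm hstat
end
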